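/- arXiv:1903.00887 — 4 statements merged into one kernel-verified Lean document; each statement's English description precedes it below -/
import Mathlib

section
/- Let μ be a positive Borel measure on ℂ of finite upper density at order 1, i.e. sup over r ≥ 1 of μ(D̄(0,r))/r < ∞. Then for any fixed r₀ > 0, the difference between l_μ(r,R) := max{∫_{r<|z|≤R, Re z>0} Re(1/z) dμ, ∫_{r<|z|≤R, Re z<0} Re(−1/z) dμ} and l̄_μ(r,R) := max{∫_r^R μ(t;cos⁺)/t² dt, ∫_r^R μ(t;cos⁻)/t² dt} is bounded uniformly over all r₀ ≤ r < R < ∞. -/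
/-!
Write `M_g(t) = ∫_{‖z‖ ≤ t} g dμ` for `g = cos⁺ ∘ arg` or `cos⁻ ∘ arg`. Since
`Re (1/z) = cos (arg z) / ‖z‖`, each integral in `l_μ(r, R)` equals `∫_{r < ‖z‖ ≤ R} g / ‖z‖ dμ`.
Writing `1 / max r ‖z‖ - 1 / R = ∫_r^R 1_{‖z‖ ≤ t} dt / t²` and applying Fubini gives the Abel
summation identity `∫_{r < ‖z‖ ≤ R} g / ‖z‖ dμ - ∫_r^R M_g(t) / t² dt = M_g(R) / R - M_g(r) / r`,
and finite upper density bounds `|M_g(t) / t|` uniformly for `t ≥ r₀`.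
-/

open MeasureTheory Complex Set Metric

theorem integral_inv_sq_of_pos {a b : ℝ} (ha : 0 < a) (hab : a ≤ b) :
    ∫ t in a..b, (t ^ 2)⁻¹ = a⁻¹ - b⁻¹ := by
  have h0 : (0 : ℝ) ∉ uIcc a b := by
    rw [uIcc_of_le hab]; exact fun h => ha.not_ge h.1
  have := integral_zpow (a := a) (b := b) (n := -2) (Or.inr ⟨by norm_num, h0⟩)
  simp only [zpow_neg, zpow_ofNat] at this
  rw [this]; norm_num; ring

theorem setIntegral_Ioc_inter_Ici_inv_sq {r R a : ℝ} (hr : 0 < r) (hrR : r ≤ R) (haR : a ≤ R) :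
    ∫ t in Ioc r R ∩ Ici a, (t ^ 2)⁻¹ = (max r a)⁻¹ - R⁻¹ := by
  rcases le_or_gt a r with har | har
  · have hIoc : Ioc r R ∩ Ici a = Ioc r R := inter_eq_left.2 fun t ht => har.trans ht.1.le
    rw [hIoc, max_eq_left har, ← intervalIntegral.integral_of_le hrR,
      integral_inv_sq_of_pos hr hrR]
  · have hIcc : Ioc r R ∩ Ici a = Icc a R := by
      ext t; simp only [mem_inter_iff, mem_Ioc, mem_Ici, mem_Icc]
      constructor
      · rintro ⟨⟨-, htR⟩, hat⟩; exact ⟨hat, htR⟩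
      · rintro ⟨hat, htR⟩; exact ⟨⟨har.trans_le hat, htR⟩, hat⟩
    rw [hIcc, integral_Icc_eq_integral_Ioc, ← intervalIntegral.integral_of_le haR,
      max_eq_right har.le, integral_inv_sq_of_pos (hr.trans har) haR]

section Density

variable {E : Type*} [NormedAddCommGroup E] [MeasurableSpace E] {μ : Measure E} {C : ℝ}

theorem measure_closedBall_le_of_density
    (hC : ∀ r : ℝ, 1 ≤ r → μ (closedBall 0 r) ≤ ENNReal.ofReal (C * r)) (t : ℝ) :
    μ (closedBall 0 t) ≤ ENNReal.ofReal (max C 0 * max t 1) :=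
  calc μ (closedBall 0 t) ≤ μ (closedBall 0 (max t 1)) :=
        measure_mono (closedBall_subset_closedBall (le_max_left _ _))
    _ ≤ ENNReal.ofReal (C * max t 1) := hC _ (le_max_right _ _)
    _ ≤ ENNReal.ofReal (max C 0 * max t 1) := by
        gcongr
        exact le_max_left C 0

theorem measure_closedBall_lt_top_of_density
    (hC : ∀ r : ℝ, 1 ≤ r → μ (closedBall 0 r) ≤ ENNReal.ofReal (C * r)) (t : ℝ) :
    μ (closedBall 0 t) < ⊤ :=
  (measure_closedBall_le_of_density hC t).trans_lt ENNReal.ofReal_lt_top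

theorem isFiniteMeasureOnCompacts_of_density
    (hC : ∀ r : ℝ, 1 ≤ r → μ (closedBall 0 r) ≤ ENNReal.ofReal (C * r)) :
    IsFiniteMeasureOnCompacts μ where
  lt_top_of_isCompact _K hK :=
    have ⟨t, hKt⟩ := hK.isBounded.subset_closedBall 0
    (measure_mono hKt).trans_lt (measure_closedBall_lt_top_of_density hC t)

theorem abs_setIntegral_closedBall_div_le_of_density
    (hC : ∀ r : ℝ, 1 ≤ r → μ (closedBall 0 r) ≤ ENNReal.ofReal (C * r))
    {g : E → ℝ} (hg : ∀ z, ‖g z‖ ≤ 1)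
    {r₀ t : ℝ} (hr₀ : 0 < r₀) (ht : r₀ ≤ t) :
    |(∫ z in closedBall 0 t, g z ∂μ) / t| ≤ max C 0 * max 1 r₀⁻¹ := by
  have ht0 : 0 < t := hr₀.trans_le ht
  have hball : μ.real (closedBall 0 t) ≤ max C 0 * max t 1 :=
    ENNReal.toReal_le_of_le_ofReal (by positivity) (measure_closedBall_le_of_density hC t)
  calc |(∫ z in closedBall 0 t, g z ∂μ) / t|
      = ‖∫ z in closedBall 0 t, g z ∂μ‖ / t := by rw [abs_div, abs_of_pos ht0, Real.norm_eq_abs]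
    _ ≤ 1 * μ.real (closedBall 0 t) / t := by
        gcongr
        exact norm_setIntegral_le_of_norm_le_const
          (measure_closedBall_lt_top_of_density hC t) fun z _ => hg z
    _ ≤ max C 0 * max t 1 / t := by rw [one_mul]; gcongr
    _ = max C 0 * max 1 t⁻¹ := by
        rw [mul_div_assoc, ← max_div_div_right ht0.le, div_self ht0.ne', one_div]
    _ ≤ max C 0 * max 1 r₀⁻¹ := by gcongr

end Density

section Annulus

variable {E : Type*} [NormedAddCommGroup E] [MeasurableSpace E] [OpensMeasurableSpace E]
  {μ : Measure E} {g : E → ℝ} {r R : ℝ}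

theorem measurableSet_annulus (r R : ℝ) : MeasurableSet {z : E | r < ‖z‖ ∧ ‖z‖ ≤ R} :=
  (measurableSet_lt measurable_const measurable_norm).inter
    (measurableSet_le measurable_norm measurable_const)

/-- Fubini for the kernel `1_{‖z‖ ≤ t} g z / t²` on `closedBall 0 R × (r, R]`. -/
theorem intervalIntegral_setIntegral_closedBall_div_sq [SFinite μ]
    (hg : IntegrableOn g (closedBall 0 R) μ) (hr : 0 < r) (hrR : r ≤ R) :
    ∫ t in r..R, (∫ z in closedBall 0 t, g z ∂μ) / t ^ 2
      = ∫ z in closedBall 0 R, g z * ((max r ‖z‖)⁻¹ - R⁻¹) ∂μ := by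
  set K : E × ℝ → ℝ := {p | ‖p.1‖ ≤ p.2}.indicator fun p => g p.1 / p.2 ^ 2
  have hK_int : Integrable K ((μ.restrict (closedBall 0 R)).prod (volume.restrict (Ioc r R))) := by
    have hsq : IntegrableOn (fun t : ℝ => (t ^ 2)⁻¹) (Ioc r R) :=
      (ContinuousOn.integrableOn_Icc (continuousOn_id.pow 2 |>.inv₀ fun t ht =>
        pow_ne_zero 2 (hr.trans_le ht.1).ne')).mono_set Ioc_subset_Icc_self
    refine (hg.norm.mul_prod hsq).mono' ?_ (Filter.Eventually.of_forall fun p => ?_)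
    · exact (hg.1.comp_fst.div₀ (measurable_snd.pow_const 2).aestronglyMeasurable).indicator
        (measurableSet_le measurable_fst.norm measurable_snd)
    · simp only [K, indicator_apply]
      split_ifs
      · rw [norm_div, norm_pow, Real.norm_eq_abs p.2, sq_abs, div_eq_mul_inv]
      · rw [norm_zero]; positivity
  have inner_z : ∀ t ∈ Ioc r R,
      ∫ z in closedBall 0 R, K (z, t) ∂μ = (∫ z in closedBall 0 t, g z ∂μ) / t ^ 2 := by
    intro t ht
    have : (fun z => K (z, t)) = (closedBall 0 t).indicator fun z => g z / t ^ 2 := by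
      ext z; by_cases h : ‖z‖ ≤ t <;> simp [K, h]
    rw [this, setIntegral_indicator measurableSet_closedBall,
      inter_eq_right.2 (closedBall_subset_closedBall ht.2), integral_div]
  have inner_t : ∀ z ∈ closedBall (0 : E) R,
      ∫ t in Ioc r R, K (z, t) = g z * ((max r ‖z‖)⁻¹ - R⁻¹) := by
    intro z hz
    have : (fun t => K (z, t)) = (Ici ‖z‖).indicator fun t => g z * (t ^ 2)⁻¹ := by
      ext t; by_cases h : ‖z‖ ≤ t <;> simp [K, h, div_eq_mul_inv]
    rw [this, setIntegral_indicator measurableSet_Ici, integral_const_mul,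
      setIntegral_Ioc_inter_Ici_inv_sq hr hrR (mem_closedBall_zero_iff.1 hz)]
  calc ∫ t in r..R, (∫ z in closedBall 0 t, g z ∂μ) / t ^ 2
      = ∫ t in Ioc r R, ∫ z in closedBall 0 R, K (z, t) ∂μ := by
        rw [intervalIntegral.integral_of_le hrR]
        exact setIntegral_congr_fun measurableSet_Ioc fun t ht => (inner_z t ht).symm
    _ = ∫ z in closedBall 0 R, (∫ t in Ioc r R, K (z, t)) ∂μ :=
        (integral_integral_swap (f := fun z t => K (z, t)) hK_int).symm
    _ = _ := setIntegral_congr_fun measurableSet_closedBall inner_t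

theorem setIntegral_closedBall_mul_inv_max_sub
    (hg : IntegrableOn g (closedBall 0 R) μ) (hr : 0 < r) (hrR : r ≤ R) :
    ∫ z in closedBall 0 R, g z * ((max r ‖z‖)⁻¹ - R⁻¹) ∂μ
      = (∫ z in closedBall 0 r, g z ∂μ) / r + ∫ z in {z | r < ‖z‖ ∧ ‖z‖ ≤ R}, g z / ‖z‖ ∂μ
        - (∫ z in closedBall 0 R, g z ∂μ) / R := by
  have hm : IntegrableOn (fun z => g z * (max r ‖z‖)⁻¹) (closedBall 0 R) μ :=
    hg.mul_bdd (by fun_prop) (c := r⁻¹) (Filter.Eventually.of_forall fun z => by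
      rw [norm_inv, Real.norm_of_nonneg (hr.le.trans (le_max_left _ _))]
      exact inv_anti₀ hr (le_max_left _ _))
  have hsplit : closedBall (0 : E) R = closedBall 0 r ∪ {z | r < ‖z‖ ∧ ‖z‖ ≤ R} := by
    ext z
    simp only [mem_union, mem_closedBall_zero_iff, mem_ofPred_eq]
    constructor
    · intro hz; exact (le_or_gt ‖z‖ r).imp_right fun h => ⟨h, hz⟩
    · rintro (hz | hz)
      exacts [hz.trans hrR, hz.2]
  have hdisj : Disjoint (closedBall (0 : E) r) {z | r < ‖z‖ ∧ ‖z‖ ≤ R} :=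
    disjoint_left.2 fun z hz hz' => (mem_closedBall_zero_iff.1 hz).not_gt hz'.1
  simp_rw [mul_sub]
  rw [integral_sub hm (hg.mul_const _), integral_mul_const, ← div_eq_mul_inv]
  congr 1
  rw [hsplit, setIntegral_union hdisj (measurableSet_annulus r R)
      (integrableOn_union.1 (hsplit ▸ hm)).1 (integrableOn_union.1 (hsplit ▸ hm)).2,
    setIntegral_congr_fun measurableSet_closedBall
      (fun z hz => by rw [max_eq_left (mem_closedBall_zero_iff.1 hz)]),
    setIntegral_congr_fun (measurableSet_annulus r R) (fun z hz => by rw [max_eq_right hz.1.le]),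
    integral_mul_const]
  simp only [div_eq_mul_inv]

/-- Abel summation against the counting function `t ↦ ∫_{‖z‖ ≤ t} g dμ`. -/
theorem setIntegral_annulus_div_norm_sub_intervalIntegral [SFinite μ]
    (hg : IntegrableOn g (closedBall 0 R) μ) (hr : 0 < r) (hrR : r ≤ R) :
    ∫ z in {z | r < ‖z‖ ∧ ‖z‖ ≤ R}, g z / ‖z‖ ∂μ
        - ∫ t in r..R, (∫ z in closedBall 0 t, g z ∂μ) / t ^ 2
      = (∫ z in closedBall 0 R, g z ∂μ) / R - (∫ z in closedBall 0 r, g z ∂μ) / r := by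
  rw [intervalIntegral_setIntegral_closedBall_div_sq hg hr hrR,
    setIntegral_closedBall_mul_inv_max_sub hg hr hrR]
  ring

theorem abs_setIntegral_annulus_div_norm_sub_le_of_density [SFinite μ] {C : ℝ}
    (hC : ∀ r : ℝ, 1 ≤ r → μ (closedBall 0 r) ≤ ENNReal.ofReal (C * r))
    (hg_meas : AEStronglyMeasurable g μ) (hg : ∀ z, ‖g z‖ ≤ 1)
    {r₀ : ℝ} (hr₀ : 0 < r₀) (hr : r₀ ≤ r) (hrR : r ≤ R) :
    |∫ z in {z | r < ‖z‖ ∧ ‖z‖ ≤ R}, g z / ‖z‖ ∂μ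
        - ∫ t in r..R, (∫ z in closedBall 0 t, g z ∂μ) / t ^ 2|
      ≤ 2 * (max C 0 * max 1 r₀⁻¹) := by
  have hgR : IntegrableOn g (closedBall 0 R) μ :=
    .of_bound (measure_closedBall_lt_top_of_density hC R) hg_meas.restrict 1
      (Filter.Eventually.of_forall hg)
  rw [setIntegral_annulus_div_norm_sub_intervalIntegral hgR (hr₀.trans_le hr) hrR, two_mul]
  exact (abs_sub _ _).trans (add_le_add
    (abs_setIntegral_closedBall_div_le_of_density hC hg hr₀ (hr.trans hrR))
    (abs_setIntegral_closedBall_div_le_of_density hC hg hr₀ hr))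

end Annulus

theorem setIntegral_inter_pos_div {α : Type*} [MeasurableSpace α] {μ : Measure α}
    {A : Set α} (hA : MeasurableSet A) {f : α → ℝ} (hf : Measurable f) (w : α → ℝ) :
    ∫ x in A ∩ {x | 0 < f x}, f x / w x ∂μ = ∫ x in A, max (f x) 0 / w x ∂μ := by
  rw [setIntegral_eq_of_subset_of_forall_sdiff_eq_zero hA inter_subset_left
    fun x hx => by rw [max_eq_right (not_lt.1 fun h => hx.2 ⟨hx.1, h⟩), zero_div]]
  exact setIntegral_congr_fun (hA.inter (measurableSet_lt measurable_const hf))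
    fun x hx => by rw [max_eq_left hx.2.le]

namespace Complex

theorem re_one_div_eq_div_norm_sq (z : ℂ) : (1 / z).re = z.re / ‖z‖ ^ 2 := by
  rw [one_div, inv_re, normSq_eq_norm_sq]

theorem cos_arg_div_norm (z : ℂ) : Real.cos z.arg / ‖z‖ = z.re / ‖z‖ ^ 2 := by
  rcases eq_or_ne z 0 with rfl | hz
  · simp
  · rw [cos_arg hz, div_div, sq]

theorem max_cos_arg_zero_div_norm (z : ℂ) :
    max (Real.cos z.arg) 0 / ‖z‖ = max z.re 0 / ‖z‖ ^ 2 := by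
  rw [← max_div_div_right (norm_nonneg z), ← max_div_div_right (by positivity), zero_div,
    zero_div, cos_arg_div_norm]

theorem max_neg_cos_arg_zero_div_norm (z : ℂ) :
    max (-Real.cos z.arg) 0 / ‖z‖ = max (-z.re) 0 / ‖z‖ ^ 2 := by
  rw [← max_div_div_right (norm_nonneg z), ← max_div_div_right (by positivity), zero_div,
    zero_div, neg_div, neg_div, cos_arg_div_norm]

theorem setIntegral_annulus_re_pos_one_div (μ : Measure ℂ) (r R : ℝ) :
    ∫ z in {z : ℂ | r < ‖z‖ ∧ ‖z‖ ≤ R ∧ 0 < z.re}, (1 / z).re ∂μ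
      = ∫ z in {z : ℂ | r < ‖z‖ ∧ ‖z‖ ≤ R}, max (Real.cos z.arg) 0 / ‖z‖ ∂μ := by
  have hset : {z : ℂ | r < ‖z‖ ∧ ‖z‖ ≤ R ∧ 0 < z.re}
      = {z : ℂ | r < ‖z‖ ∧ ‖z‖ ≤ R} ∩ {z | 0 < z.re} := by
    ext z; simp [and_assoc]
  simp_rw [hset, re_one_div_eq_div_norm_sq, max_cos_arg_zero_div_norm]
  exact setIntegral_inter_pos_div (measurableSet_annulus r R) measurable_re _

theorem setIntegral_annulus_re_neg_neg_one_div (μ : Measure ℂ) (r R : ℝ) :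
    ∫ z in {z : ℂ | r < ‖z‖ ∧ ‖z‖ ≤ R ∧ z.re < 0}, (-(1 / z)).re ∂μ
      = ∫ z in {z : ℂ | r < ‖z‖ ∧ ‖z‖ ≤ R}, max (-Real.cos z.arg) 0 / ‖z‖ ∂μ := by
  have hset : {z : ℂ | r < ‖z‖ ∧ ‖z‖ ≤ R ∧ z.re < 0}
      = {z : ℂ | r < ‖z‖ ∧ ‖z‖ ≤ R} ∩ {z | 0 < -z.re} := by
    ext z; simp [and_assoc]
  simp_rw [hset, neg_re, re_one_div_eq_div_norm_sq, max_neg_cos_arg_zero_div_norm, ← neg_div]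
  exact setIntegral_inter_pos_div (measurableSet_annulus r R) measurable_re.neg _

end Complex

/-- For a positive Borel measure `μ` on `ℂ` of finite upper density at order 1,
the logarithmic interval function `l_μ(r,R)` and its averaged variant `l̄_μ(r,R)`
differ by a uniformly bounded quantity on `r₀ ≤ r < R < ∞`. -/
theorem stmt1
    (μ : Measure ℂ) (C : ℝ)
    (hC : ∀ r : ℝ, 1 ≤ r → μ (Metric.closedBall 0 r) ≤ ENNReal.ofReal (C * r))
    (r₀ : ℝ) (hr₀ : 0 < r₀) :
    ∃ B : ℝ, ∀ r R : ℝ, r₀ ≤ r → r < R →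
      |max (∫ z in {z : ℂ | r < ‖z‖ ∧ ‖z‖ ≤ R ∧ 0 < z.re},
              (1 / z).re ∂μ)
           (∫ z in {z : ℂ | r < ‖z‖ ∧ ‖z‖ ≤ R ∧ z.re < 0},
              (-(1 / z)).re ∂μ)
        - max (∫ t in r..R,
                (∫ z in Metric.closedBall (0 : ℂ) t, max (Real.cos z.arg) 0 ∂μ) / t ^ 2)
              (∫ t in r..R,
                (∫ z in Metric.closedBall (0 : ℂ) t, max (-Real.cos z.arg) 0 ∂μ) / t ^ 2)|
      ≤ B := by
  -- yields `SFinite μ`, needed for Fubini, since `ℂ` is second countable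
  have := isFiniteMeasureOnCompacts_of_density hC
  have hcos : Measurable fun z : ℂ => Real.cos z.arg := Real.measurable_cos.comp measurable_arg
  refine ⟨2 * (max C 0 * max 1 r₀⁻¹), fun r R hr hrR => ?_⟩
  rw [setIntegral_annulus_re_pos_one_div, setIntegral_annulus_re_neg_neg_one_div]
  refine (abs_max_sub_max_le_max _ _ _ _).trans (max_le ?_ ?_)
  · refine abs_setIntegral_annulus_div_norm_sub_le_of_density hC
      (hcos.max measurable_const).aestronglyMeasurable (fun z => ?_) hr₀ hr hrR.le
    rw [Real.norm_of_nonneg (le_max_right _ _)]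
    exact max_le (Real.cos_le_one _) zero_le_one
  · refine abs_setIntegral_annulus_div_norm_sub_le_of_density hC
      (hcos.neg.max measurable_const).aestronglyMeasurable (fun z => ?_) hr₀ hr hrR.le
    rw [Real.norm_of_nonneg (le_max_right _ _)]
    exact max_le (neg_le.1 (Real.neg_one_le_cos _)) zero_le_one
end

section
/- Let q : ℝ₊ → ℝ₊ be increasing with ∫_1^∞ q(y)/y² dy < ∞, and let η be a positive Borel measure on ℂ of finite upper density at order 1 whose support is contained in the closed set {z : |Re z| ≤ q(|Im z|)}. Then ∫_{|z|>1, Re z>0} Re(1/z) dη(z) < ∞, i.e. η satisfies the Blaschke condition in the right half-plane. -/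
open MeasureTheory Complex

/-!
On the support, `0 ≤ Re (1/z) = Re z / |z|² ≤ q(|Im z|) / |z|² ≤ q(|z|) / |z|²`, so it suffices to
integrate the radial function `q(|z|)/|z|²` over `|z| > 1`. On the dyadic annulus
`2ⁿ ≤ |z| < 2ⁿ⁺¹` it is at most `q(2ⁿ⁺¹)/4ⁿ`, while the annulus has mass `O(2ⁿ⁺¹)` by the density
bound; and `q(2ⁿ⁺¹)/2ⁿ⁺¹` is controlled by `∫ q(y)/y² dy` over `[2ⁿ⁺¹, 2ⁿ⁺²)` since `q` is
increasing.
-/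

open Set Metric Function
open scoped ENNReal

section Dyadic

variable {q : ℝ → ℝ}

lemma ofReal_div_le_four_mul_setLIntegral_Ico (hq0 : ∀ y, 0 ≤ q y)
    (hqmono : MonotoneOn q (Ici 0)) {a : ℝ} (ha : 0 < a) :
    ENNReal.ofReal (q a / a) ≤ 4 * ∫⁻ y in Ico a (2 * a), ENNReal.ofReal (q y / y ^ 2) := by
  have hlow : ∀ y ∈ Ico a (2 * a),
      ENNReal.ofReal (q a / (2 * a) ^ 2) ≤ ENNReal.ofReal (q y / y ^ 2) := fun y hy =>
    have hy0 : 0 < y := ha.trans_le hy.1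
    ENNReal.ofReal_le_ofReal <| div_le_div₀ (hq0 y) (hqmono ha.le hy0.le hy.1)
      (by positivity) (by gcongr; exact hy.2.le)
  calc ENNReal.ofReal (q a / a)
      = 4 * (ENNReal.ofReal (q a / (2 * a) ^ 2) * ENNReal.ofReal a) := by
        rw [← ENNReal.ofReal_mul (by have := hq0 a; positivity), ← ENNReal.ofReal_ofNat 4,
          ← ENNReal.ofReal_mul (by norm_num)]
        congr 1
        field_simp
        ring
    _ = 4 * ∫⁻ _ in Ico a (2 * a), ENNReal.ofReal (q a / (2 * a) ^ 2) := by
        rw [setLIntegral_const, Real.volume_Ico]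
        ring_nf
    _ ≤ 4 * ∫⁻ y in Ico a (2 * a), ENNReal.ofReal (q y / y ^ 2) :=
        mul_le_mul_right (setLIntegral_mono' measurableSet_Ico hlow) 4

lemma tsum_ofReal_div_le_four_mul_setLIntegral_Ici (hq0 : ∀ y, 0 ≤ q y)
    (hqmono : MonotoneOn q (Ici 0)) :
    ∑' n : ℕ, ENNReal.ofReal (q (2 * 2 ^ n) / (2 * 2 ^ n)) ≤
      4 * ∫⁻ y in Ici 1, ENNReal.ofReal (q y / y ^ 2) := by
  have hdisj : Pairwise (Disjoint on fun n : ℕ => Ico ((2 : ℝ) * 2 ^ n) (2 * (2 * 2 ^ n))) := by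
    simpa [Order.succ_eq_add_one, pow_succ'] using
      ((pow_right_mono₀ (one_le_two (α := ℝ))).const_mul zero_le_two).pairwise_disjoint_on_Ico_succ
  have hsub : (⋃ n : ℕ, Ico ((2 : ℝ) * 2 ^ n) (2 * (2 * 2 ^ n))) ⊆ Ici 1 :=
    iUnion_subset fun n y hy =>
      (one_le_mul_of_one_le_of_one_le one_le_two (one_le_pow₀ one_le_two)).trans hy.1
  calc ∑' n : ℕ, ENNReal.ofReal (q (2 * 2 ^ n) / (2 * 2 ^ n))
      ≤ ∑' n : ℕ, 4 * ∫⁻ y in Ico (2 * 2 ^ n) (2 * (2 * 2 ^ n)), ENNReal.ofReal (q y / y ^ 2) :=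
        ENNReal.tsum_le_tsum fun n =>
          ofReal_div_le_four_mul_setLIntegral_Ico hq0 hqmono (by positivity)
    _ = 4 * ∫⁻ y in ⋃ n : ℕ, Ico (2 * 2 ^ n) (2 * (2 * 2 ^ n)), ENNReal.ofReal (q y / y ^ 2) := by
        rw [ENNReal.tsum_mul_left, lintegral_iUnion (fun _ => measurableSet_Ico) hdisj]
    _ ≤ 4 * ∫⁻ y in Ici 1, ENNReal.ofReal (q y / y ^ 2) :=
        mul_le_mul_right (lintegral_mono_set hsub) 4

variable {E : Type*} [SeminormedAddCommGroup E] [MeasurableSpace E] [OpensMeasurableSpace E]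
  (μ : Measure E)

lemma setLIntegral_annulus_le (hq0 : ∀ y, 0 ≤ q y) (hqmono : MonotoneOn q (Ici 0))
    {a C : ℝ} (ha : 0 < a) (hμ : μ (closedBall 0 (2 * a)) ≤ ENNReal.ofReal (C * (2 * a))) :
    ∫⁻ z in (norm : E → ℝ) ⁻¹' Ico a (2 * a), ENNReal.ofReal (q ‖z‖ / ‖z‖ ^ 2) ∂μ ≤
      ENNReal.ofReal (4 * C) * ENNReal.ofReal (q (2 * a) / (2 * a)) := by
  have hup : ∀ z ∈ (norm : E → ℝ) ⁻¹' Ico a (2 * a),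
      ENNReal.ofReal (q ‖z‖ / ‖z‖ ^ 2) ≤ ENNReal.ofReal (q (2 * a) / a ^ 2) := fun z hz =>
    ENNReal.ofReal_le_ofReal <| div_le_div₀ (hq0 _)
      (hqmono (norm_nonneg z) (by positivity : (0 : ℝ) ≤ 2 * a) hz.2.le) (by positivity)
      (by gcongr; exact hz.1)
  have hsub : (norm : E → ℝ) ⁻¹' Ico a (2 * a) ⊆ closedBall (0 : E) (2 * a) := fun z hz =>
    mem_closedBall_zero_iff.2 hz.2.le
  calc ∫⁻ z in (norm : E → ℝ) ⁻¹' Ico a (2 * a), ENNReal.ofReal (q ‖z‖ / ‖z‖ ^ 2) ∂μ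
      ≤ ∫⁻ _ in (norm : E → ℝ) ⁻¹' Ico a (2 * a), ENNReal.ofReal (q (2 * a) / a ^ 2) ∂μ :=
        setLIntegral_mono' (continuous_norm.measurable measurableSet_Ico) hup
    _ ≤ ENNReal.ofReal (q (2 * a) / a ^ 2) * ENNReal.ofReal (C * (2 * a)) := by
        rw [setLIntegral_const]
        exact mul_le_mul_right ((measure_mono hsub).trans hμ) _
    _ = ENNReal.ofReal (4 * C) * ENNReal.ofReal (q (2 * a) / (2 * a)) := by
        rw [← ENNReal.ofReal_mul (by have := hq0 (2 * a); positivity),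
          ← ENNReal.ofReal_mul' (by have := hq0 (2 * a); positivity)]
        congr 1
        field_simp
        ring

lemma setLIntegral_one_lt_norm_lt_top (hq0 : ∀ y, 0 ≤ q y) (hqmono : MonotoneOn q (Ici 0))
    (hqint : ∫⁻ y in Ici 1, ENNReal.ofReal (q y / y ^ 2) < ∞) {C : ℝ}
    (hC : ∀ r : ℝ, 1 ≤ r → μ (closedBall 0 r) ≤ ENNReal.ofReal (C * r)) :
    ∫⁻ z in {z : E | 1 < ‖z‖}, ENNReal.ofReal (q ‖z‖ / ‖z‖ ^ 2) ∂μ < ∞ := by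
  have hcover : {z : E | 1 < ‖z‖} ⊆ ⋃ n : ℕ, (norm : E → ℝ) ⁻¹' Ico (2 ^ n) (2 * 2 ^ n) :=
    fun z (hz : 1 < ‖z‖) => by
      obtain ⟨n, hn⟩ := exists_nat_pow_near hz.le one_lt_two
      exact mem_iUnion.2 ⟨n, hn.1, by rw [← pow_succ']; exact hn.2⟩
  calc ∫⁻ z in {z : E | 1 < ‖z‖}, ENNReal.ofReal (q ‖z‖ / ‖z‖ ^ 2) ∂μ
      ≤ ∑' n : ℕ, ∫⁻ z in (norm : E → ℝ) ⁻¹' Ico (2 ^ n) (2 * 2 ^ n),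
          ENNReal.ofReal (q ‖z‖ / ‖z‖ ^ 2) ∂μ :=
        (lintegral_mono_set hcover).trans (lintegral_iUnion_le _ _)
    _ ≤ ∑' n : ℕ, ENNReal.ofReal (4 * C) * ENNReal.ofReal (q (2 * 2 ^ n) / (2 * 2 ^ n)) :=
        ENNReal.tsum_le_tsum fun n => setLIntegral_annulus_le μ hq0 hqmono (by positivity)
          (hC _ (one_le_mul_of_one_le_of_one_le one_le_two (one_le_pow₀ one_le_two)))
    _ ≤ ENNReal.ofReal (4 * C) * (4 * ∫⁻ y in Ici 1, ENNReal.ofReal (q y / y ^ 2)) := by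
        rw [ENNReal.tsum_mul_left]
        exact mul_le_mul_right (tsum_ofReal_div_le_four_mul_setLIntegral_Ici hq0 hqmono) _
    _ < ∞ :=
        ENNReal.mul_lt_top ENNReal.ofReal_lt_top (ENNReal.mul_lt_top ENNReal.ofNat_lt_top hqint)

end Dyadic

lemma enorm_re_inv_le {q : ℝ → ℝ} (hqmono : MonotoneOn q (Ici 0)) {z : ℂ} (hre : 0 ≤ z.re)
    (hz : |z.re| ≤ q |z.im|) : ‖(z⁻¹).re‖ₑ ≤ ENNReal.ofReal (q ‖z‖ / ‖z‖ ^ 2) := by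
  rw [inv_re, normSq_eq_norm_sq, Real.enorm_of_nonneg (by positivity)]
  refine ENNReal.ofReal_le_ofReal (div_le_div_of_nonneg_right ?_ (by positivity))
  exact (le_abs_self _).trans
    (hz.trans (hqmono (abs_nonneg z.im) (norm_nonneg z) (abs_im_le_norm z)))

/-- If `q : ℝ₊ → ℝ₊` is increasing with `∫_1^∞ q(y)/y² dy < ∞` and `η` is a positive
Borel measure on `ℂ` of finite upper density at order 1 supported in
`{z : |Re z| ≤ q |Im z|}`, then `η` satisfies the Blaschke condition in the right
half-plane: `∫_{|z|>1, Re z>0} Re(1/z) dη < ∞`. -/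
theorem stmt2
    (q : ℝ → ℝ) (hq0 : ∀ y, 0 ≤ q y) (hqmono : MonotoneOn q (Set.Ici 0))
    (hqint : IntegrableOn (fun y : ℝ => q y / y ^ 2) (Set.Ici 1))
    (η : Measure ℂ) (C : ℝ)
    (hC : ∀ r : ℝ, 1 ≤ r → η (Metric.closedBall 0 r) ≤ ENNReal.ofReal (C * r))
    (hsupp : η {z : ℂ | ¬ |z.re| ≤ q |z.im|} = 0) :
    IntegrableOn (fun z : ℂ => (1 / z).re)
      {z : ℂ | 1 < ‖z‖ ∧ 0 < z.re} η := by
  set S : Set ℂ := {z : ℂ | 1 < ‖z‖ ∧ 0 < z.re}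
  have hS : MeasurableSet S := by measurability
  refine ⟨by fun_prop, ?_⟩
  calc ∫⁻ z, ‖(1 / z).re‖ₑ ∂η.restrict S
      ≤ ∫⁻ z in S, ENNReal.ofReal (q ‖z‖ / ‖z‖ ^ 2) ∂η := by
        refine lintegral_mono_ae ?_
        filter_upwards [ae_restrict_mem hS,
          ae_restrict_of_ae (measure_eq_zero_iff_ae_notMem.1 hsupp)] with z hzS hz
        simpa using enorm_re_inv_le hqmono hzS.2.le (not_not.1 hz)
    _ ≤ ∫⁻ z in {z : ℂ | 1 < ‖z‖}, ENNReal.ofReal (q ‖z‖ / ‖z‖ ^ 2) ∂η :=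
        lintegral_mono_set fun z hz => hz.1
    _ < ∞ := setLIntegral_one_lt_norm_lt_top η hq0 hqmono hqint.lintegral_lt_top hC
end

section
/- Let Q : [1,∞) → ℝ₊ be increasing with ∫_1^∞ Q(y)/y² dy < ∞, and let n : [1,∞) → ℝ₊ be increasing with n(t) ≤ Ct for some constant C and all t ≥ 1. Then the Lebesgue–Stieltjes integral ∫_1^∞ Q(y)/y² dn(y) is finite. -/
/-!
Cut `(1, ∞)` into the dyadic blocks `(2ᵏ, 2ᵏ⁺¹]`. As `Q` increases and `1/y²` decreases, the
`dn`-integral of `Q(y)/y²` over a block is at most `Q(2ᵏ⁺¹)/4ᵏ · (n(2ᵏ⁺¹) - n(2ᵏ))`, and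
`n(2ᵏ⁺¹) - n(2ᵏ) ≤ C·2ᵏ⁺¹`, while the Lebesgue integral over the next block is at least
`Q(2ᵏ⁺¹)/4ᵏ⁺² · 2ᵏ⁺¹`. Summing over `k`, the `dn`-integral is at most `16C ∫_1^∞ Q(y)/y² dy`.
-/

open MeasureTheory Set

lemma lintegral_Ioi_one_eq_tsum_Ioc_two_pow (μ : Measure ℝ) (f : ℝ → ENNReal) :
    ∫⁻ y in Ioi 1, f y ∂μ = ∑' k : ℕ, ∫⁻ y in Ioc (2 ^ k) (2 ^ (k + 1)), f y ∂μ := by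
  have hmono : Monotone fun k : ℕ => (2 : ℝ) ^ k := pow_right_mono₀ one_le_two
  have hunion : ⋃ k : ℕ, Ioc ((2 : ℝ) ^ k) (2 ^ (k + 1)) = Ioi 1 := by
    simpa using iUnion_Ioc_map_succ_eq_Ioi (fun k => hmono bot_le) <| not_bddAbove_iff.2 fun x =>
      let ⟨k, hk⟩ := pow_unbounded_of_one_lt x one_lt_two; ⟨_, ⟨k, rfl⟩, hk⟩
  rw [← hunion]
  exact lintegral_iUnion (fun _ => measurableSet_Ioc) hmono.pairwise_disjoint_on_Ioc_succ f

open MeasureTheory Set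

section DyadicBlock

variable {μ : Measure ℝ} {Q : ℝ → ℝ} {a b : ℝ}

lemma setLIntegral_Ioc_div_sq_le (ha : 0 < a) (hQ0 : ∀ y ∈ Ioc a b, 0 ≤ Q y)
    (hQ : MonotoneOn Q (Icc a b)) :
    ∫⁻ y in Ioc a b, ENNReal.ofReal (Q y / y ^ 2) ∂μ ≤
      ENNReal.ofReal (Q b / a ^ 2) * μ (Ioc a b) := by
  rw [← setLIntegral_const]
  refine setLIntegral_mono_ae' measurableSet_Ioc
    (ae_of_all _ fun y hy => ENNReal.ofReal_le_ofReal ?_)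
  have hb : b ∈ Ioc a b := ⟨hy.1.trans_le hy.2, le_rfl⟩
  have hQb : 0 ≤ Q b := hQ0 b hb
  calc Q y / y ^ 2 ≤ Q b / y ^ 2 := by
        gcongr; exact hQ (Ioc_subset_Icc_self hy) (Ioc_subset_Icc_self hb) hy.2
    _ ≤ Q b / a ^ 2 := by gcongr; exact hy.1.le

lemma ofReal_mul_le_setLIntegral_Ioc_div_sq (ha : 0 < a) (hQ0 : ∀ y ∈ Ioc a b, 0 ≤ Q y)
    (hQ : MonotoneOn Q (Icc a b)) :
    ENNReal.ofReal (Q a / b ^ 2) * μ (Ioc a b) ≤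
      ∫⁻ y in Ioc a b, ENNReal.ofReal (Q y / y ^ 2) ∂μ := by
  rw [← setLIntegral_const]
  refine setLIntegral_mono_ae' measurableSet_Ioc
    (ae_of_all _ fun y hy => ENNReal.ofReal_le_ofReal ?_)
  have hQy : 0 ≤ Q y := hQ0 y hy
  have hya : 0 < y := ha.trans hy.1
  calc Q a / b ^ 2 ≤ Q y / b ^ 2 := by
        gcongr; exact hQ (left_mem_Icc.2 (hy.1.le.trans hy.2)) (Ioc_subset_Icc_self hy) hy.1.le
    _ ≤ Q y / y ^ 2 := by gcongr; exact hy.2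

lemma setLIntegral_Ioc_div_sq_le_of_measure_Ioc_le {C : ℝ} (ha : 0 < a) (hC : 0 ≤ C)
    (hQ0 : ∀ y ∈ Ioc a (4 * a), 0 ≤ Q y) (hQ : MonotoneOn Q (Icc a (4 * a)))
    (hμ : μ (Ioc a (2 * a)) ≤ ENNReal.ofReal (C * a)) :
    ∫⁻ y in Ioc a (2 * a), ENNReal.ofReal (Q y / y ^ 2) ∂μ ≤
      ENNReal.ofReal (8 * C) * ∫⁻ y in Ioc (2 * a) (4 * a), ENNReal.ofReal (Q y / y ^ 2) := by
  have hQ2a : 0 ≤ Q (2 * a) := hQ0 _ ⟨by linarith, by linarith⟩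
  calc ∫⁻ y in Ioc a (2 * a), ENNReal.ofReal (Q y / y ^ 2) ∂μ
      ≤ ENNReal.ofReal (Q (2 * a) / a ^ 2) * μ (Ioc a (2 * a)) :=
        setLIntegral_Ioc_div_sq_le ha (fun y hy => hQ0 y ⟨hy.1, by linarith [hy.2]⟩)
          (hQ.mono (Icc_subset_Icc_right (by linarith)))
    _ ≤ ENNReal.ofReal (Q (2 * a) / a ^ 2) * ENNReal.ofReal (C * a) := by gcongr
    _ = ENNReal.ofReal (8 * C) *
          (ENNReal.ofReal (Q (2 * a) / (4 * a) ^ 2) * volume (Ioc (2 * a) (4 * a))) := by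
        rw [Real.volume_Ioc, ← ENNReal.ofReal_mul (by positivity),
          ← ENNReal.ofReal_mul (by positivity), ← ENNReal.ofReal_mul (by positivity)]
        congr 1
        field_simp
        ring
    _ ≤ ENNReal.ofReal (8 * C) *
          ∫⁻ y in Ioc (2 * a) (4 * a), ENNReal.ofReal (Q y / y ^ 2) := by
        gcongr
        exact ofReal_mul_le_setLIntegral_Ioc_div_sq (by positivity)
          (fun y hy => hQ0 y ⟨by linarith [hy.1], hy.2⟩)
          (hQ.mono (Icc_subset_Icc_left (by linarith)))

end DyadicBlock

lemma setLIntegral_Ioi_one_div_sq_lt_top {μ : Measure ℝ} {Q : ℝ → ℝ} {C : ℝ} (hC : 0 ≤ C)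
    (hQ0 : ∀ y, 1 ≤ y → 0 ≤ Q y) (hQ : MonotoneOn Q (Ici 1))
    (hQint : ∫⁻ y in Ioi 1, ENNReal.ofReal (Q y / y ^ 2) < ⊤)
    (hμ : ∀ a, 1 ≤ a → μ (Ioc a (2 * a)) ≤ ENNReal.ofReal (C * a)) :
    ∫⁻ y in Ioi 1, ENNReal.ofReal (Q y / y ^ 2) ∂μ < ⊤ := by
  set F : ℝ → ENNReal := fun y => ENNReal.ofReal (Q y / y ^ 2)
  have hblock : ∀ k : ℕ, ∫⁻ y in Ioc (2 ^ k) (2 ^ (k + 1)), F y ∂μ ≤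
      ENNReal.ofReal (8 * C) * ∫⁻ y in Ioc (2 ^ (k + 1)) (2 ^ (k + 1 + 1)), F y := by
    intro k
    have hk : (1 : ℝ) ≤ 2 ^ k := one_le_pow₀ one_le_two
    rw [show (2 : ℝ) ^ (k + 1) = 2 * 2 ^ k by ring,
      show (2 : ℝ) ^ (k + 1 + 1) = 4 * 2 ^ k by ring]
    exact setLIntegral_Ioc_div_sq_le_of_measure_Ioc_le (by positivity) hC
      (fun y hy => hQ0 y (hk.trans hy.1.le)) (hQ.mono fun y hy => hk.trans hy.1) (hμ _ hk)
  calc ∫⁻ y in Ioi 1, F y ∂μ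
      = ∑' k : ℕ, ∫⁻ y in Ioc (2 ^ k) (2 ^ (k + 1)), F y ∂μ :=
        lintegral_Ioi_one_eq_tsum_Ioc_two_pow μ F
    _ ≤ ∑' k : ℕ, ENNReal.ofReal (8 * C) *
          ∫⁻ y in Ioc (2 ^ (k + 1)) (2 ^ (k + 1 + 1)), F y := ENNReal.tsum_le_tsum hblock
    _ ≤ ENNReal.ofReal (8 * C) * ∫⁻ y in Ioi 1, F y := by
        rw [ENNReal.tsum_mul_left, lintegral_Ioi_one_eq_tsum_Ioc_two_pow]
        exact mul_le_mul_right (ENNReal.tsum_comp_le_tsum_of_injective (add_left_injective 1)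
          fun k => ∫⁻ y in Ioc (2 ^ k) (2 ^ (k + 1)), F y) _
    _ < ⊤ := ENNReal.mul_lt_top ENNReal.ofReal_lt_top hQint

/-- If `Q : [1,∞) → ℝ₊` is increasing with `∫_1^∞ Q(y)/y² dy < ∞` and `n` is an
increasing (Stieltjes) function with `n(t) ≤ C t` for `t ≥ 1`, then the
Lebesgue–Stieltjes integral `∫_1^∞ Q(y)/y² dn(y)` is finite. -/
theorem stmt3
    (Q : ℝ → ℝ) (hQ0 : ∀ y, 1 ≤ y → 0 ≤ Q y) (hQmono : MonotoneOn Q (Set.Ici 1))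
    (hQint : IntegrableOn (fun y : ℝ => Q y / y ^ 2) (Set.Ici 1))
    (n : StieltjesFunction ℝ) (C : ℝ)
    (hn0 : ∀ t, 1 ≤ t → 0 ≤ n t) (hn : ∀ t, 1 ≤ t → n t ≤ C * t) :
    IntegrableOn (fun y : ℝ => Q y / y ^ 2) (Set.Ioi 1) n.measure := by
  have hC : 0 ≤ C := by linarith [hn0 1 le_rfl, hn 1 le_rfl]
  have hn_Ioc : ∀ a, 1 ≤ a → n.measure (Ioc a (2 * a)) ≤ ENNReal.ofReal (2 * C * a) := by
    intro a ha
    rw [StieltjesFunction.measure_Ioc]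
    exact ENNReal.ofReal_le_ofReal (by linarith [hn0 a ha, hn (2 * a) (by linarith)])
  have hmeas : AEMeasurable Q (n.measure.restrict (Ioi 1)) :=
    aemeasurable_restrict_of_monotoneOn measurableSet_Ioi (hQmono.mono Ioi_subset_Ici_self)
  have hnonneg : 0 ≤ᵐ[n.measure.restrict (Ioi 1)] fun y => Q y / y ^ 2 :=
    (ae_restrict_iff' measurableSet_Ioi).2 <| ae_of_all _ fun y hy =>
      div_nonneg (hQ0 y hy.le) (sq_nonneg y)
  refine ⟨(hmeas.div (measurable_id.pow_const 2).aemeasurable).aestronglyMeasurable,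
    (hasFiniteIntegral_iff_ofReal hnonneg).2 ?_⟩
  exact setLIntegral_Ioi_one_div_sq_lt_top (by positivity) hQ0 hQmono
    (hQint.mono_set Ioi_subset_Ici_self).lintegral_lt_top hn_Ioc
end

section
/- For z ∈ ℂ with Re z ≠ 0 and y₁ < y₂ real, define Ω(z, [iy₁, iy₂]) := ω(z, [iy₁, iy₂]) − ((y₂ − y₁)/π)·|Re(1/z)|, where ω(z, [iy₁, iy₂]) = (1/π)∫_{y₁}^{y₂} |Re z|/((Re z)² + (y − Im z)²) dy. Then for fixed y₁, y₂ there is a constant C (depending on y₁, y₂) such that |Ω(z, [iy₁, iy₂])| ≤ C/|z|² for all |z| ≥ 2·max(|y₁|,|y₂|,1). -/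
open Complex

/-!
With `P(z, y) = |Re z| / ‖z - iy‖²` the Poisson kernel of the half-plane containing `z`, the
correction term is `(y₂ - y₁) P(z, 0)/π`, since `|Re(1/z)| = |Re z| / ‖z‖²`. Hence
`π Ω = ∫_{y₁}^{y₂} (P(z, y) - P(z, 0)) dy`, and
`P(z, y) - P(z, 0) = |Re z| (‖z‖² - ‖z - iy‖²) / (‖z - iy‖² ‖z‖²)`. For `2|y| ≤ ‖z‖` the
numerator is at most `‖z‖ · |y| · (5/2)‖z‖` and `‖z - iy‖ ≥ ‖z‖/2`, so the integrand is
`O(|y| / ‖z‖²)` uniformly on the segment.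
-/

noncomputable def halfPlanePoissonKernel (z : ℂ) (y : ℝ) : ℝ :=
  |z.re| / (z.re ^ 2 + (y - z.im) ^ 2)

lemma halfPlanePoissonKernel_eq (z : ℂ) (y : ℝ) :
    halfPlanePoissonKernel z y = |z.re| / ‖z - y * I‖ ^ 2 := by
  rw [halfPlanePoissonKernel, Complex.sq_norm, Complex.normSq_apply]
  simp only [sub_re, sub_im, mul_re, mul_im, ofReal_re, ofReal_im, I_re, I_im]
  ring

lemma abs_re_one_div (z : ℂ) : |(1 / z).re| = |z.re| / ‖z‖ ^ 2 := by
  rw [one_div, inv_re, abs_div, abs_of_nonneg (normSq_nonneg z), ← Complex.sq_norm]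

lemma continuous_halfPlanePoissonKernel (z : ℂ) : Continuous (halfPlanePoissonKernel z) := by
  unfold halfPlanePoissonKernel
  by_cases hz : z.re = 0
  · simp only [hz, abs_zero, zero_div]
    exact continuous_const
  · exact continuous_const.div (by fun_prop) fun y => by positivity

lemma abs_halfPlanePoissonKernel_sub_le {z : ℂ} {y : ℝ} (hy : 2 * |y| ≤ ‖z‖) :
    |halfPlanePoissonKernel z y - |z.re| / ‖z‖ ^ 2| ≤ 10 * |y| / ‖z‖ ^ 2 := by
  set r := ‖z‖
  set s := ‖z - y * I‖
  have hyI : ‖(y : ℂ) * I‖ = |y| := by simp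
  rcases (norm_nonneg z).eq_or_lt with hr | hr
  · obtain rfl : z = 0 := norm_eq_zero.mp hr.symm
    simp only [halfPlanePoissonKernel, zero_re, abs_zero, zero_div, sub_self]
    positivity
  have hs_lower : r / 2 ≤ s := by
    have := norm_sub_norm_le z (y * I)
    linarith
  have hs_upper : s ≤ r + |y| := hyI ▸ norm_sub_le z (y * I)
  have hrs : |r - s| ≤ |y| := by
    simpa [hyI] using abs_norm_sub_norm_le z (z - y * I)
  have hs : 0 < s := by linarith
  have hr0 : r ≠ 0 := hr.ne'
  have hdiff : halfPlanePoissonKernel z y - |z.re| / r ^ 2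
      = |z.re| * ((r - s) * (r + s)) / (s ^ 2 * r ^ 2) := by
    have hP : halfPlanePoissonKernel z y = |z.re| / s ^ 2 := halfPlanePoissonKernel_eq z y
    rw [hP]
    field_simp
    ring
  rw [hdiff, abs_div, abs_mul, abs_mul, abs_abs, abs_of_pos (by positivity : 0 < r + s),
    abs_of_pos (by positivity : 0 < s ^ 2 * r ^ 2)]
  calc |z.re| * (|r - s| * (r + s)) / (s ^ 2 * r ^ 2)
      ≤ r * (|y| * (5 / 2 * r)) / ((r / 2) ^ 2 * r ^ 2) := by
        gcongr
        · exact abs_re_le_norm z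
        · linarith
    _ = 10 * |y| / r ^ 2 := by
        field_simp
        ring

lemma integral_halfPlanePoissonKernel_sub (z : ℂ) (a b : ℝ) :
    (∫ y in a..b, halfPlanePoissonKernel z y) - (b - a) * |(1 / z).re|
      = ∫ y in a..b, (halfPlanePoissonKernel z y - |z.re| / ‖z‖ ^ 2) := by
  rw [intervalIntegral.integral_sub
    ((continuous_halfPlanePoissonKernel z).intervalIntegrable a b) intervalIntegrable_const,
    intervalIntegral.integral_const, smul_eq_mul, abs_re_one_div]

lemma abs_le_max_abs_abs_of_mem_uIcc {a b y : ℝ} (hy : y ∈ Set.uIcc a b) :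
    |y| ≤ max |a| |b| := by
  rcases Set.mem_uIcc.mp hy with ⟨hay, hyb⟩ | ⟨hby, hya⟩
  · exact abs_le_max_abs_abs hay hyb
  · exact max_comm |a| |b| ▸ abs_le_max_abs_abs hby hya

theorem stmt11_general (y₁ y₂ : ℝ) :
    ∃ C : ℝ, ∀ z : ℂ, z.re ≠ 0 → 2 * max (max |y₁| |y₂|) 1 ≤ ‖z‖ →
      _root_.abs ((1 / Real.pi) * (∫ y in y₁..y₂, |z.re| / (z.re ^ 2 + (y - z.im) ^ 2))
            - (y₂ - y₁) / Real.pi * |(1 / z).re|)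
        ≤ C / ‖z‖ ^ 2 := by
  simp only [← halfPlanePoissonKernel.eq_def]
  set N := max |y₁| |y₂|
  refine ⟨10 * N * |y₂ - y₁| / Real.pi, fun z _ hz => ?_⟩
  have hN : 2 * N ≤ ‖z‖ := le_trans (by gcongr; exact le_max_left _ _) hz
  have hbound : ∀ y ∈ Set.uIoc y₁ y₂,
      ‖halfPlanePoissonKernel z y - |z.re| / ‖z‖ ^ 2‖ ≤ 10 * N / ‖z‖ ^ 2 := fun y hy => by
    have hyN := abs_le_max_abs_abs_of_mem_uIcc (Set.uIoc_subset_uIcc hy)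
    calc _ ≤ 10 * |y| / ‖z‖ ^ 2 := abs_halfPlanePoissonKernel_sub_le (by linarith)
      _ ≤ 10 * N / ‖z‖ ^ 2 := by gcongr
  have hint := intervalIntegral.norm_integral_le_of_norm_le_const hbound
  rw [← integral_halfPlanePoissonKernel_sub, Real.norm_eq_abs] at hint
  have hΩ : (1 / Real.pi) * (∫ y in y₁..y₂, halfPlanePoissonKernel z y)
        - (y₂ - y₁) / Real.pi * |(1 / z).re|
      = ((∫ y in y₁..y₂, halfPlanePoissonKernel z y) - (y₂ - y₁) * |(1 / z).re|) / Real.pi := by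
    ring
  calc _ ≤ 10 * N / ‖z‖ ^ 2 * |y₂ - y₁| / Real.pi := by
        rw [hΩ, abs_div, abs_of_pos Real.pi_pos]
        gcongr
    _ = 10 * N * |y₂ - y₁| / Real.pi / ‖z‖ ^ 2 := by ring

/-- The genus-1 two-sided harmonic charge
`Ω(z,[iy₁,iy₂]) = ω(z,[iy₁,iy₂]) − ((y₂−y₁)/π)|Re(1/z)|` decays like `O(1/|z|²)`:
there is `C` (depending on `y₁, y₂`) with `|Ω(z,[iy₁,iy₂])| ≤ C/|z|²` for all
`|z| ≥ 2·max(|y₁|,|y₂|,1)` with `Re z ≠ 0`. -/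
theorem stmt11 (y₁ y₂ : ℝ) (h : y₁ < y₂) :
    ∃ C : ℝ, ∀ z : ℂ, z.re ≠ 0 → 2 * max (max |y₁| |y₂|) 1 ≤ ‖z‖ →
      _root_.abs ((1 / Real.pi) * (∫ y in y₁..y₂, |z.re| / (z.re ^ 2 + (y - z.im) ^ 2))
            - (y₂ - y₁) / Real.pi * |(1 / z).re|)
        ≤ C / ‖z‖ ^ 2 :=
  stmt11_general y₁ y₂
end
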